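/- Let (X, ρ) and (Y, σ) be metric spaces with X nonempty and ρ(x,z) ≤ 1 for all x, z ∈ X, and let f : X → Y be 1-Lipschitz. Then f is privacy-compatible (for every γ > 0 and δ ∈ (0,1) there exist ε > 0 and a mechanism achieving ε-differential privacy and (γ,δ)-utility) if and only if there exists a uniformly positive Borel probability measure on the subspace f(X) of (Y,σ). -/

import Mathlib

/-!
If a mechanism is `ε`-private with `(γ, 1/2)`-utility, then, as `X` has diameter at most `1`, the
single output distribution `M x₀` gives every ball `B(f x, γ)` mass at least `e^{-ε}/2`. Disjoint
balls around a `2γ`-separated subset of `f(X)` then force that subset to be finite, so `f(X)` is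
totally bounded, and a geometric mixture of Dirac masses along a dense sequence of `f(X)` is
uniformly positive.

Conversely, push a uniformly positive `μ` forward to `ν` on `Y` and use the exponential mechanism,
with density proportional to `exp (-k σ(y, f x))` against `ν`. It is `2k`-private because `f` is
`1`-Lipschitz, and its mass outside `B(f x, γ)` is at most `e^{-kγ} / (e^{-kγ/2} ν(B(f x, γ/2)))`,
which uniform positivity makes small for large `k`.
-/

open MeasureTheory Set Metric Filter Real TopologicalSpace
open scoped ENNReal NNReal

section TotallyBounded

variable {α : Type*}

theorem exists_maximal_isSeparated [PseudoEMetricSpace α] (ε : ℝ≥0∞) (s : Set α) :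
    ∃ N, Maximal (fun N ↦ N ⊆ s ∧ IsSeparated ε N) N :=
  zorn_subset {N | N ⊆ s ∧ IsSeparated ε N} fun c hc hchain ↦
    ⟨⋃₀ c, ⟨sUnion_subset fun _ hN ↦ (hc hN).1,
      hchain.pairwise_sUnion.2 fun _ hN ↦ (hc hN).2⟩, fun _ ↦ subset_sUnion_of_mem⟩

theorem totallyBounded_of_forall_isSeparated_finite [PseudoEMetricSpace α] {s : Set α}
    (h : ∀ ε : ℝ≥0, 0 < ε → ∀ N ⊆ s, IsSeparated ε N → N.Finite) : TotallyBounded s := by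
  rw [EMetric.totallyBounded_iff']
  intro ε hε
  obtain ⟨δ, hδ, hδε⟩ := ENNReal.lt_iff_exists_nnreal_btwn.1 hε
  obtain ⟨N, hN⟩ := exists_maximal_isSeparated (δ : ℝ≥0∞) s
  refine ⟨N, hN.prop.1, h δ (mod_cast hδ) N hN.prop.1 hN.prop.2, fun x hx ↦ ?_⟩
  obtain ⟨y, hyN, hxy⟩ := IsCover.of_maximal_isSeparated hN hx
  exact mem_biUnion hyN (hxy.trans_lt hδε)

theorem Metric.IsSeparated.finite_of_le_measure_ball [PseudoMetricSpace α] [MeasurableSpace α]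
    [OpensMeasurableSpace α] (m : Measure α) [IsFiniteMeasure m] {N : Set α} {r : ℝ}
    (hN : IsSeparated (ENNReal.ofReal (2 * r)) N) {c : ℝ≥0∞} (hc : c ≠ 0)
    (h : ∀ y ∈ N, c ≤ m (ball y r)) : N.Finite := by
  have hdisj : Pairwise (Function.onFun Disjoint fun y : N ↦ ball (y : α) r) := by
    intro y z hyz
    have hyz : ENNReal.ofReal (2 * r) < edist (y : α) z := hN y.2 z.2 (Subtype.coe_ne_coe.2 hyz)
    rw [edist_dist, ENNReal.ofReal_lt_ofReal_iff'] at hyz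
    exact ball_disjoint_ball (by linarith [hyz.1])
  have hfin := Measure.finite_const_le_meas_of_disjoint_iUnion m (pos_iff_ne_zero.2 hc)
    (fun _ ↦ measurableSet_ball) hdisj (measure_ne_top _ _)
  rw [show {y : N | c ≤ m (ball y r)} = univ from eq_univ_of_forall fun y ↦ h y y.2,
    finite_univ_iff] at hfin
  exact finite_coe_iff.1 hfin

end TotallyBounded

section UniformlyPositive

variable {α : Type*} [MeasurableSpace α]

def MeasureTheory.Measure.IsUniformlyPositive [PseudoMetricSpace α] (μ : Measure α) : Prop :=
  ∀ r > (0 : ℝ), 0 < ⨅ y, μ (ball y r)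

theorem MeasureTheory.Measure.isUniformlyPositive_of_totallyBounded [PseudoMetricSpace α]
    (μ : Measure α) [μ.IsOpenPosMeasure] (h : TotallyBounded (univ : Set α)) :
    μ.IsUniformlyPositive := by
  intro r hr
  obtain ⟨t, -, ht, hcover⟩ := finite_approx_of_totallyBounded h (r / 2) (half_pos hr)
  have hpos : 0 < ht.toFinset.inf fun c ↦ μ (ball c (r / 2)) :=
    (Finset.lt_inf_iff ENNReal.zero_lt_top).2 fun c _ ↦ measure_ball_pos μ c (half_pos hr)
  refine hpos.trans_le (le_iInf fun y ↦ ?_)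
  obtain ⟨c, hct, hyc⟩ := mem_iUnion₂.1 (hcover (mem_univ y))
  calc ht.toFinset.inf (fun c ↦ μ (ball c (r / 2))) ≤ μ (ball c (r / 2)) :=
        Finset.inf_le (ht.mem_toFinset.2 hct)
    _ ≤ μ (ball y r) := measure_mono (ball_subset (by rw [dist_comm]; linarith [mem_ball.1 hyc]))

theorem exists_isProbabilityMeasure_isOpenPosMeasure [TopologicalSpace α] [SeparableSpace α]
    [Nonempty α] : ∃ μ : Measure α, IsProbabilityMeasure μ ∧ μ.IsOpenPosMeasure := by
  obtain ⟨u, hu⟩ := exists_dense_seq α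
  let μ : Measure α := Measure.sum fun n ↦ (2⁻¹ : ℝ≥0∞) ^ (n + 1) • Measure.dirac (u n)
  refine ⟨μ, ⟨?_⟩, ⟨fun U hU hne ↦ ?_⟩⟩
  · simp [μ, ENNReal.tsum_geometric_add_one, ENNReal.one_sub_inv_two,
      ENNReal.inv_mul_cancel two_ne_zero ENNReal.ofNat_ne_top]
  · obtain ⟨n, hn⟩ := hu.exists_mem_open hU hne
    refine (lt_of_lt_of_le ?_ (Measure.le_iff'.1 (Measure.le_sum _ n) U)).ne'
    simpa [Measure.dirac_apply_of_mem hn] using ENNReal.pow_pos (by norm_num) _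

theorem exists_isProbabilityMeasure_isUniformlyPositive [PseudoMetricSpace α] [Nonempty α]
    (h : TotallyBounded (univ : Set α)) :
    ∃ μ : Measure α, IsProbabilityMeasure μ ∧ μ.IsUniformlyPositive := by
  have : SeparableSpace α := isSeparable_univ_iff.1 h.isSeparable
  obtain ⟨μ, hμ, _⟩ := exists_isProbabilityMeasure_isOpenPosMeasure (α := α)
  exact ⟨μ, hμ, μ.isUniformlyPositive_of_totallyBounded h⟩

end UniformlyPositive

section Tilted

variable {Y : Type*} [MeasurableSpace Y] {ν : Measure Y} {u v : Y → ℝ}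

theorem tilted_apply_le_exp_mul_tilted_apply [SFinite ν] [NeZero ν]
    (hu : Integrable (fun y ↦ exp (u y)) ν) (hv : Integrable (fun y ↦ exp (v y)) ν) {a : ℝ}
    (h : ∀ y, |u y - v y| ≤ a) (s : Set Y) :
    ν.tilted u s ≤ ENNReal.ofReal (exp (2 * a)) * ν.tilted v s := by
  -- One factor `exp a` comes from the densities, the other from the normalizing constants.
  have hexp : ∀ y, exp (u y) ≤ exp a * exp (v y) := fun y ↦ by
    rw [← exp_add]; exact exp_le_exp.2 (by linarith [(abs_le.1 (h y)).2])
  have hZ : ∫ y, exp (v y) ∂ν ≤ exp a * ∫ y, exp (u y) ∂ν := by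
    rw [← integral_const_mul]
    refine integral_mono hv (hu.const_mul _) fun y ↦ ?_
    rw [← exp_add]; exact exp_le_exp.2 (by linarith [(abs_le.1 (h y)).1])
  have hdens : ∀ y, exp (u y) / ∫ x, exp (u x) ∂ν
      ≤ exp (2 * a) * (exp (v y) / ∫ x, exp (v x) ∂ν) := fun y ↦ by
    rw [← mul_div_assoc, div_le_div_iff₀ (integral_exp_pos hu) (integral_exp_pos hv)]
    calc exp (u y) * ∫ x, exp (v x) ∂ν
        ≤ (exp a * exp (v y)) * (exp a * ∫ x, exp (u x) ∂ν) :=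
          mul_le_mul (hexp y) hZ (integral_exp_pos hv).le (by positivity)
      _ = exp (2 * a) * exp (v y) * ∫ x, exp (u x) ∂ν := by rw [two_mul, exp_add]; ring
  rw [tilted_apply, tilted_apply, ← lintegral_const_mul' _ _ ENNReal.ofReal_ne_top]
  refine lintegral_mono fun y ↦ ?_
  rw [← ENNReal.ofReal_mul (exp_pos _).le]
  exact ENNReal.ofReal_le_ofReal (hdens y)

theorem tilted_apply_le_of_le [IsProbabilityMeasure ν] {s : Set Y} (hs : MeasurableSet s) {b : ℝ}
    (h : ∀ y ∈ s, u y ≤ b) : ν.tilted u s ≤ ENNReal.ofReal (exp b / ∫ y, exp (u y) ∂ν) :=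
  calc ν.tilted u s ≤ ∫⁻ _ in s, ENNReal.ofReal (exp b / ∫ y, exp (u y) ∂ν) ∂ν := by
        rw [tilted_apply' _ _ hs]
        refine setLIntegral_mono' hs fun y hy ↦ ENNReal.ofReal_le_ofReal ?_
        exact div_le_div_of_nonneg_right (exp_le_exp.2 (h y hy))
          (integral_nonneg fun _ ↦ (exp_pos _).le)
    _ = ENNReal.ofReal (exp b / ∫ y, exp (u y) ∂ν) * ν s := setLIntegral_const _ _
    _ ≤ ENNReal.ofReal (exp b / ∫ y, exp (u y) ∂ν) := mul_le_of_le_one_right' prob_le_one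

theorem exp_mul_measureReal_le_integral_exp [IsFiniteMeasure ν]
    (hu : Integrable (fun y ↦ exp (u y)) ν) {s : Set Y} (hs : MeasurableSet s) {b : ℝ}
    (h : ∀ y ∈ s, b ≤ u y) : exp b * ν.real s ≤ ∫ y, exp (u y) ∂ν :=
  (setIntegral_ge_of_const_le_real hs (measure_ne_top _ _) (fun y hy ↦ exp_le_exp.2 (h y hy))
    hu.integrableOn).trans (setIntegral_le_integral hu (ae_of_all _ fun _ ↦ (exp_pos _).le))

end Tilted

theorem ofReal_one_sub_le_of_measure_compl_le {Ω : Type*} [MeasurableSpace Ω] {P : Measure Ω}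
    [IsProbabilityMeasure P] {s : Set Ω} (hs : MeasurableSet s) {δ : ℝ} (hδ : 0 ≤ δ)
    (h : P sᶜ ≤ ENNReal.ofReal δ) : ENNReal.ofReal (1 - δ) ≤ P s := by
  rw [ENNReal.ofReal_sub _ hδ, ENNReal.ofReal_one, ← compl_compl s, prob_compl_eq_one_sub hs.compl]
  exact tsub_le_tsub_left h 1

theorem integrable_exp_neg_mul_dist {Y : Type*} [PseudoMetricSpace Y] [MeasurableSpace Y]
    [OpensMeasurableSpace Y] (ν : Measure Y) [IsFiniteMeasure ν] {k : ℝ} (hk : 0 ≤ k) (a : Y) :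
    Integrable (fun y ↦ exp (-(k * dist y a))) ν :=
  Integrable.of_bound (by fun_prop) 1 (ae_of_all _ fun y ↦ by
    rw [norm_of_nonneg (exp_pos _).le, exp_le_one_iff, neg_nonpos]; positivity)

section Privacy

variable {X Y : Type*} [PseudoMetricSpace X] [MeasurableSpace Y]

def AchievesDifferentialPrivacy (ε : ℝ) (M : X → Measure Y) : Prop :=
  ∀ x z : X, ∀ T : Set Y, MeasurableSet T →
    M x T ≤ ENNReal.ofReal (exp (ε * dist x z)) * M z T

theorem AchievesDifferentialPrivacy.apply_le_exp_mul {ε : ℝ} {M : X → Measure Y}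
    (hM : AchievesDifferentialPrivacy ε M) (hε : 0 ≤ ε) (hX : ∀ x z : X, dist x z ≤ 1)
    (x z : X) {T : Set Y} (hT : MeasurableSet T) : M x T ≤ ENNReal.ofReal (exp ε) * M z T := by
  refine (hM x z T hT).trans (mul_le_mul_left (ENNReal.ofReal_le_ofReal (exp_le_exp.2 ?_)) _)
  nlinarith [hX x z]

variable [PseudoMetricSpace Y]

def AchievesUtility (f : X → Y) (γ δ : ℝ) (M : X → Measure Y) : Prop :=
  ∀ x : X, ENNReal.ofReal (1 - δ) ≤ M x (ball (f x) γ)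

def IsPrivacyCompatible (f : X → Y) : Prop :=
  ∀ γ > (0 : ℝ), ∀ δ ∈ Ioo (0 : ℝ) 1, ∃ ε > (0 : ℝ), ∃ M : X → Measure Y,
    (∀ x, IsProbabilityMeasure (M x)) ∧ AchievesDifferentialPrivacy ε M ∧ AchievesUtility f γ δ M

theorem IsPrivacyCompatible.totallyBounded_range [Nonempty X] [OpensMeasurableSpace Y]
    {f : X → Y} (hX : ∀ x z : X, dist x z ≤ 1) (h : IsPrivacyCompatible f) :
    TotallyBounded (range f) := by
  refine totallyBounded_of_forall_isSeparated_finite fun ε hε N hNf hN ↦ ?_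
  obtain ⟨η, hη, M, hM, hDP, hU⟩ := h (ε / 2) (by positivity) (1 / 2) ⟨by norm_num, by norm_num⟩
  obtain ⟨x₀⟩ := ‹Nonempty X›
  have hN' : IsSeparated (ENNReal.ofReal (2 * (ε / 2 : ℝ))) N := by
    rwa [mul_div_cancel₀ _ two_ne_zero, ENNReal.ofReal_coe_nnreal]
  refine hN'.finite_of_le_measure_ball (M x₀)
    (c := ENNReal.ofReal (1 - 1 / 2) / ENNReal.ofReal (exp η))
    (ENNReal.div_pos (by norm_num) ENNReal.ofReal_ne_top).ne' fun y hy ↦ ?_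
  obtain ⟨x, rfl⟩ := hNf hy
  refine ENNReal.div_le_of_le_mul ((hU x).trans ?_)
  rw [mul_comm]
  exact hDP.apply_le_exp_mul hη.le hX x x₀ measurableSet_ball

end Privacy

section ExponentialMechanism

variable {X Y : Type*} [PseudoMetricSpace Y] [MeasurableSpace Y]

noncomputable def expMechanism (ν : Measure Y) (f : X → Y) (k : ℝ) (x : X) : Measure Y :=
  ν.tilted fun y ↦ -(k * dist y (f x))

variable [OpensMeasurableSpace Y] (ν : Measure Y) [IsProbabilityMeasure ν] {f : X → Y} {k : ℝ}

theorem isProbabilityMeasure_expMechanism (hk : 0 ≤ k) (x : X) :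
    IsProbabilityMeasure (expMechanism ν f k x) :=
  isProbabilityMeasure_tilted (integrable_exp_neg_mul_dist ν hk _)

theorem achievesDifferentialPrivacy_expMechanism [PseudoMetricSpace X]
    (hf : ∀ x z : X, dist (f x) (f z) ≤ dist x z) (hk : 0 ≤ k) :
    AchievesDifferentialPrivacy (2 * k) (expMechanism ν f k) := by
  intro x z T _
  rw [mul_assoc]
  refine tilted_apply_le_exp_mul_tilted_apply (integrable_exp_neg_mul_dist ν hk _)
    (integrable_exp_neg_mul_dist ν hk _) (fun y ↦ ?_) T
  calc |-(k * dist y (f x)) - -(k * dist y (f z))| = k * |dist (f z) y - dist (f x) y| := by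
        rw [dist_comm y, dist_comm y, ← abs_of_nonneg hk, ← abs_mul, abs_of_nonneg hk]
        congr 1; ring
    _ ≤ k * dist x z := by
        gcongr
        exact (abs_dist_sub_le _ _ _).trans (dist_comm (f z) (f x) ▸ hf x z)

theorem achievesUtility_expMechanism {γ δ c : ℝ} (hc : 0 < c)
    (hball : ∀ x, c ≤ ν.real (ball (f x) (γ / 2))) (hk : 0 ≤ k)
    (hkδ : exp (-(k * (γ / 2))) ≤ δ * c) : AchievesUtility f γ δ (expMechanism ν f k) := by
  intro x
  have := isProbabilityMeasure_expMechanism ν (f := f) hk x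
  have hint := integrable_exp_neg_mul_dist ν hk (f x)
  have hZ : exp (-(k * (γ / 2))) * c ≤ ∫ y, exp (-(k * dist y (f x))) ∂ν :=
    (mul_le_mul_of_nonneg_left (hball x) (exp_pos _).le).trans
      (exp_mul_measureReal_le_integral_exp hint measurableSet_ball fun y hy ↦
        neg_le_neg (mul_le_mul_of_nonneg_left (mem_ball.1 hy).le hk))
  have hδ : 0 ≤ δ := by nlinarith [exp_pos (-(k * (γ / 2)))]
  refine ofReal_one_sub_le_of_measure_compl_le measurableSet_ball hδ
    ((tilted_apply_le_of_le measurableSet_ball.compl (b := -(k * γ)) fun y hy ↦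
      neg_le_neg (mul_le_mul_of_nonneg_left (not_lt.1 hy) hk)).trans
      (ENNReal.ofReal_le_ofReal ?_))
  rw [div_le_iff₀ (integral_exp_pos hint)]
  calc exp (-(k * γ)) = exp (-(k * (γ / 2))) * exp (-(k * (γ / 2))) := by
        rw [← exp_add]; ring_nf
    _ ≤ δ * c * exp (-(k * (γ / 2))) := mul_le_mul_of_nonneg_right hkδ (exp_pos _).le
    _ = δ * (exp (-(k * (γ / 2))) * c) := by ring
    _ ≤ δ * ∫ y, exp (-(k * dist y (f x))) ∂ν := mul_le_mul_of_nonneg_left hZ hδ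

end ExponentialMechanism

theorem MeasureTheory.Measure.IsUniformlyPositive.isPrivacyCompatible {X Y : Type*}
    [PseudoMetricSpace X] [PseudoMetricSpace Y] [Nonempty X] [MeasurableSpace Y]
    [OpensMeasurableSpace Y] {f : X → Y} (hf : ∀ x z : X, dist (f x) (f z) ≤ dist x z)
    {μ : Measure (range f)} [IsProbabilityMeasure μ] (hμ : μ.IsUniformlyPositive) :
    IsPrivacyCompatible f := by
  intro γ hγ δ hδ
  obtain ⟨x₀⟩ := ‹Nonempty X›
  let ν : Measure Y := μ.map (↑)
  have : IsProbabilityMeasure ν := isProbabilityMeasure_map measurable_subtype_coe.aemeasurable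
  set m := ⨅ y, μ (ball y (γ / 2))
  have hm : 0 < m.toReal := ENNReal.toReal_pos (hμ _ (half_pos hγ)).ne'
    (ne_top_of_le_ne_top (measure_ne_top μ (ball ⟨f x₀, x₀, rfl⟩ _)) (iInf_le _ _))
  have hball : ∀ x, m.toReal ≤ ν.real (ball (f x) (γ / 2)) := fun x ↦ by
    have hpre : ((↑) ⁻¹' ball (f x) (γ / 2) : Set (range f)) = ball ⟨f x, x, rfl⟩ (γ / 2) :=
      isometry_subtype_coe.preimage_ball (⟨f x, x, rfl⟩ : range f) (γ / 2)
    rw [measureReal_def, Measure.map_apply measurable_subtype_coe measurableSet_ball, hpre]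
    exact ENNReal.toReal_mono (measure_ne_top _ _) (iInf_le _ _)
  obtain ⟨k, hkδ, hk⟩ := (((tendsto_exp_neg_atTop_nhds_zero.comp
    (tendsto_id.atTop_mul_const (half_pos hγ))).eventually
      (ge_mem_nhds (mul_pos hδ.1 hm))).and (eventually_gt_atTop 0)).exists
  exact ⟨2 * k, by positivity, expMechanism ν f k, isProbabilityMeasure_expMechanism ν hk.le,
    achievesDifferentialPrivacy_expMechanism ν hf hk.le,
    achievesUtility_expMechanism ν hm hball hk.le hkδ⟩

/-- for a 1-Lipschitz `f : X → Y` on a nonempty `X` of diameter at most `1`,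
`f` is privacy-compatible if and only if there exists a uniformly positive Borel
probability measure on the subspace `f(X)` of `Y`. -/
theorem privacy_compatible_iff_uniformly_positive {X Y : Type*}
    [MetricSpace X] [MetricSpace Y] [Nonempty X] [MeasurableSpace Y] [BorelSpace Y]
    (hX : ∀ x z : X, dist x z ≤ 1)
    (f : X → Y) (hf : ∀ x z : X, dist (f x) (f z) ≤ dist x z) :
    (∀ γ > (0:ℝ), ∀ δ ∈ Set.Ioo (0:ℝ) 1, ∃ ε > (0:ℝ), ∃ M : X → Measure Y,
      (∀ x, IsProbabilityMeasure (M x)) ∧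
      (∀ x z : X, ∀ T : Set Y, MeasurableSet T →
        M x T ≤ ENNReal.ofReal (Real.exp (ε * dist x z)) * M z T) ∧
      (∀ x : X, ENNReal.ofReal (1 - δ) ≤ M x (Metric.ball (f x) γ))) ↔
    (∃ μ : Measure (Set.range f), IsProbabilityMeasure μ ∧
      ∀ r > (0:ℝ), 0 < ⨅ y : Set.range f, μ (Metric.ball y r)) := by
  change IsPrivacyCompatible f ↔
    ∃ μ : Measure (range f), IsProbabilityMeasure μ ∧ μ.IsUniformlyPositive
  constructor
  · intro h
    refine exists_isProbabilityMeasure_isUniformlyPositive ?_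
    simpa only [Subtype.coe_preimage_self] using totallyBounded_preimage (f := ((↑) : range f → Y))
      isUniformEmbedding_subtype_val.isUniformInducing (h.totallyBounded_range hX)
  · rintro ⟨μ, _, hμ⟩
    exact hμ.isPrivacyCompatible hf
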